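/- arXiv:1603.01589 — 6 statements merged into one kernel-verified Lean document; each statement's English description precedes it below -/
import Mathlib

section
/- For nonnegative integers k, i₁, i₂, i₃, the number N(k; i₁, i₂, i₃) of 0-1 fillings of a 3-row, k-column array with i_j ones in row j and no all-zero columns satisfies N(k; i₁,i₂,i₃) = C(k,i₁) · Σ_{a=0}^{i₂} C(i₁,a)·C(k−i₁, i₂−a)·C(i₁+i₂−a, k−i₃). -/
/-- The number of 0-1 fillings of an `m`-row, `k`-column array with exactly `i j` ones
in row `j` and no all-zero columns. -/
def Nfill (m k : ℕ) (i : Fin m → ℕ) : ℕ :=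
  Fintype.card {f : Fin m → Fin k → Bool //
    (∀ j : Fin m, (Finset.univ.filter fun c : Fin k => f j c = true).card = i j) ∧
    (∀ c : Fin k, ∃ j : Fin m, f j c = true)}

/-- Binomial coefficient `C(n, q)` with an integer lower argument, taken to be `0`
when `q < 0` (or, via `Nat.choose`, when `q > n`). -/
def Cz (n : ℕ) (q : ℤ) : ℕ := if 0 ≤ q then Nat.choose n q.toNat else 0

/-!
Read the three rows of a filling as subsets `A, B, C` of the `k` columns; the filling has no
zero column exactly when `A ∪ B ∪ C` is everything. Choosing `A` gives the factor `C(k, i₁)`.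
Given `A`, sort the `B` by `a = |A ∩ B|`: there are `C(i₁, a) · C(k - i₁, i₂ - a)` of them, and
then `|A ∪ B| = i₁ + i₂ - a`. Finally `C` must contain the complement of `A ∪ B`, so its
complement is a `(k - i₃)`-subset of `A ∪ B`, which gives `C(i₁ + i₂ - a, k - i₃)` choices.
-/

open Finset

section SubsetCounting

variable {α : Type*} [Fintype α] [DecidableEq α]

theorem union_eq_univ_iff_compl_subset {s C : Finset α} : s ∪ C = univ ↔ Cᶜ ⊆ s := by
  rw [← codisjoint_iff_compl_le_left, codisjoint_iff]
  rfl

theorem card_filter_powersetCard_union_eq_univ (s : Finset α) (n : ℕ) :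
    #{C ∈ powersetCard n univ | s ∪ C = univ} = Cz #s ((Fintype.card α : ℤ) - n) := by
  unfold Cz
  split_ifs with hn
  · rw [← card_powersetCard, show ((Fintype.card α : ℤ) - n).toNat = Fintype.card α - n by omega]
    apply card_nbij' compl compl
    · intro C hC
      simp_all [union_eq_univ_iff_compl_subset, card_compl]
    · intro D hD
      simp_all [union_eq_univ_iff_compl_subset, card_compl]
      omega
    · exact fun C _ => compl_compl C
    · exact fun D _ => compl_compl D
  · refine card_eq_zero.2 (filter_eq_empty_iff.2 fun C hC _ => hn ?_)
    have := card_le_univ C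
    simp_all

theorem inter_union_eq_and_union_sdiff_eq {A P Q : Finset α} (hPA : P ⊆ A)
    (hAQ : Disjoint A Q) : A ∩ (P ∪ Q) = P ∧ (P ∪ Q) \ A = Q := by
  rw [inter_union_distrib_left, inter_eq_right.2 hPA, disjoint_iff_inter_eq_empty.1 hAQ,
    union_empty, union_sdiff_distrib, sdiff_eq_empty_iff_subset.2 hPA, empty_union,
    hAQ.symm.sdiff_eq_left]
  exact ⟨rfl, rfl⟩

theorem card_filter_powersetCard_card_inter_eq (A : Finset α) {a m : ℕ} (ham : a ≤ m) :
    #{B ∈ powersetCard m univ | #(A ∩ B) = a} =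
      (#A).choose a * (Fintype.card α - #A).choose (m - a) := by
  rw [← card_compl, ← card_powersetCard, ← card_powersetCard, ← card_product]
  apply card_nbij' (fun B => (A ∩ B, B \ A)) (fun P => P.1 ∪ P.2)
  · intro B hB
    simp only [coe_filter, mem_powersetCard, subset_univ, true_and, Set.mem_ofPred_eq,
      coe_product, Set.mem_prod, mem_coe] at hB ⊢
    refine ⟨⟨inter_subset_left, hB.2⟩, fun x hx => by simp_all, ?_⟩
    rw [card_sdiff, hB.1, hB.2]
  · rintro ⟨P, Q⟩ hPQ
    simp only [coe_product, Set.mem_prod, mem_coe, mem_powersetCard,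
      subset_compl_iff_disjoint_left] at hPQ
    obtain ⟨⟨hPA, hP⟩, hAQ, hQ⟩ := hPQ
    simp only [coe_filter, mem_powersetCard, subset_univ, true_and, Set.mem_ofPred_eq]
    rw [card_union_of_disjoint (disjoint_of_subset_left hPA hAQ),
      (inter_union_eq_and_union_sdiff_eq hPA hAQ).1]
    omega
  · intro B _
    dsimp only
    rw [union_comm, inter_comm, sdiff_union_inter]
  · rintro ⟨P, Q⟩ hPQ
    simp only [coe_product, Set.mem_prod, mem_coe, mem_powersetCard,
      subset_compl_iff_disjoint_left] at hPQ
    obtain ⟨hPA, hAQ⟩ := inter_union_eq_and_union_sdiff_eq hPQ.1.1 hPQ.2.1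
    simp [hPA, hAQ]

theorem sum_powersetCard_card_union {M : Type*} [AddCommMonoid M] (A : Finset α) (m : ℕ)
    (f : ℕ → M) :
    ∑ B ∈ powersetCard m univ, f #(A ∪ B) =
      ∑ a ∈ range (m + 1),
        ((#A).choose a * (Fintype.card α - #A).choose (m - a)) • f (#A + m - a) := by
  have hmaps : ∀ B ∈ powersetCard m (univ : Finset α), #(A ∩ B) ∈ range (m + 1) := by
    intro B hB
    rw [mem_range, Nat.lt_succ_iff, ← (mem_powersetCard.1 hB).2]
    exact card_le_card inter_subset_right
  rw [← sum_fiberwise_of_maps_to hmaps]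
  refine sum_congr rfl fun a ha => ?_
  have hcard : ∀ B ∈ {B ∈ powersetCard m (univ : Finset α) | #(A ∩ B) = a}, #(A ∪ B) = #A + m - a := by
    intro B hB
    rw [mem_filter, mem_powersetCard] at hB
    have := card_union_add_card_inter A B
    omega
  rw [sum_congr rfl fun B hB => congrArg f (hcard B hB), sum_const,
    card_filter_powersetCard_card_inter_eq A (Nat.lt_succ_iff.1 (mem_range.1 ha))]

end SubsetCounting

theorem nfill_three_eq_sum (k i₁ i₂ i₃ : ℕ) :
    Nfill 3 k ![i₁, i₂, i₃] = ∑ A ∈ powersetCard i₁ (univ : Finset (Fin k)),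
      ∑ B ∈ powersetCard i₂ univ, #{C ∈ powersetCard i₃ univ | A ∪ B ∪ C = univ} := by
  rw [Nfill, Fintype.card_subtype]
  trans #{p ∈ powersetCard i₁ (univ : Finset (Fin k)) ×ˢ powersetCard i₂ univ ×ˢ
    powersetCard i₃ univ | p.1 ∪ p.2.1 ∪ p.2.2 = univ}
  · apply card_nbij' (fun f : Fin 3 → Fin k → Bool =>
        (univ.filter (f 0 ·), univ.filter (f 1 ·), univ.filter (f 2 ·)))
      (fun p : Finset (Fin k) × Finset (Fin k) × Finset (Fin k) =>
        ![(· ∈ p.1), (· ∈ p.2.1), (· ∈ p.2.2)])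
    · intro f hf
      simpa [eq_univ_iff_forall, Fin.forall_fin_succ, Fin.exists_fin_succ] using hf
    · intro p hp
      simpa [eq_univ_iff_forall, Fin.forall_fin_succ, Fin.exists_fin_succ] using hp
    · intro f _
      funext j c
      fin_cases j <;> simp
    · intro p _
      ext <;> simp
  · simp only [card_filter, sum_product]

theorem stmt3 (k i₁ i₂ i₃ : ℕ) :
    Nfill 3 k ![i₁, i₂, i₃] =
      Nat.choose k i₁ *
        ∑ a ∈ Finset.range (i₂ + 1),
          Nat.choose i₁ a * Nat.choose (k - i₁) (i₂ - a) *
            Cz (i₁ + i₂ - a) ((k : ℤ) - (i₃ : ℤ)) := by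
  have hcard : Fintype.card (Fin k) = k := Fintype.card_fin k
  have hinner : ∀ A ∈ powersetCard i₁ (univ : Finset (Fin k)),
      ∑ B ∈ powersetCard i₂ univ, #{C ∈ powersetCard i₃ univ | A ∪ B ∪ C = univ} =
        ∑ a ∈ range (i₂ + 1), i₁.choose a * (k - i₁).choose (i₂ - a) *
          Cz (i₁ + i₂ - a) ((k : ℤ) - i₃) := by
    intro A hA
    simp only [card_filter_powersetCard_union_eq_univ, hcard]
    rw [sum_powersetCard_card_union A i₂ (fun u => Cz u ((k : ℤ) - i₃)), hcard,
      (mem_powersetCard.1 hA).2]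
    simp only [smul_eq_mul]
  rw [nfill_three_eq_sum, sum_congr rfl hinner, sum_const, card_powersetCard, card_univ, hcard,
    smul_eq_mul]
end

section
/- The m-fold black diamond power of x equals the Fubini polynomial: x ◆ x ◆ ··· ◆ x (m factors) = Σ_{k=1}^{m} k!·S(m,k)·x^k, where S(m,k) is the Stirling number of the second kind. -/
/-- The black diamond product of the power series `A 0, …, A (m-1)`:
`Σ_k x^k Σ_{i₁,…,i_m} a⁽¹⁾_{i₁} ⋯ a⁽ᵐ⁾_{i_m} N(k; i₁, …, i_m)` (the sum may be restricted
to indices `≤ k` since the filling count vanishes otherwise). -/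
noncomputable def multiDiamond (m : ℕ) (A : Fin m → PowerSeries ℂ) : PowerSeries ℂ :=
  PowerSeries.mk fun k =>
    ∑ i : Fin m → Fin (k + 1),
      (∏ j : Fin m, PowerSeries.coeff (i j) (A j)) *
        (Nfill m k (fun j => (i j : ℕ)) : ℂ)

/-- Stirling numbers of the second kind. -/
def stirling2 : ℕ → ℕ → ℕ
  | 0, 0 => 1
  | 0, _ + 1 => 0
  | _ + 1, 0 => 0
  | n + 1, k + 1 => (k + 1) * stirling2 n (k + 1) + stirling2 n k

/-!
Only the index tuple `(1, …, 1)` contributes to the `k`-th coefficient of `X ◆ ⋯ ◆ X`, and a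
filling with a single one in each row is the graph of a map from the `m` rows to the `k`
columns, which has no empty column exactly when it is surjective. Surjections
`Fin m → Fin k` are counted by `k! S(m, k)`: after fixing the image `v` of the first point, the
rest of the map is either onto, or onto the complement of `v`, which is the Stirling recurrence.
-/

open Nat Function

section Surjections

variable {α β γ : Type*}

lemma card_surjective_congr (e : β ≃ γ) :
    Nat.card {f : α → β // Surjective f} = Nat.card {f : α → γ // Surjective f} :=
  Nat.card_congr <| (Equiv.arrowCongr (Equiv.refl α) e).subtypeEquiv fun f =>
    (e.comp_surjective f).symm

lemma surjective_cons_iff {m : ℕ} (v : β) (g : Fin m → β) :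
    Surjective (Fin.cons v g : Fin (m + 1) → β) ↔ ∀ y, y ≠ v → ∃ x, g x = y := by
  constructor
  · intro h y hy
    obtain ⟨x, rfl⟩ := h y
    cases x using Fin.cases with
    | zero => exact absurd rfl hy
    | succ x => exact ⟨x, rfl⟩
  · intro h y
    by_cases hy : y = v
    · exact ⟨0, by simp [hy]⟩
    · obtain ⟨x, rfl⟩ := h y hy
      exact ⟨x.succ, rfl⟩

lemma card_surjective_fin_succ [Fintype β] (m : ℕ) :
    Nat.card {f : Fin (m + 1) → β // Surjective f} =
      ∑ v : β, Nat.card {g : Fin m → β // ∀ y, y ≠ v → ∃ x, g x = y} := by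
  let P : β → (Fin m → β) → Prop := fun v g => ∀ y, y ≠ v → ∃ x, g x = y
  rw [← Nat.card_sigma]
  refine Nat.card_congr <| Equiv.trans ?_ (Equiv.subtypeProdEquivSigmaSubtype P)
  exact ((Fin.consEquiv fun _ => β).subtypeEquiv fun p => (surjective_cons_iff p.1 p.2).symm).symm

lemma card_cover_compl_singleton [Finite α] [Finite β] (v : β) :
    Nat.card {g : α → β // ∀ y, y ≠ v → ∃ x, g x = y} =
      Nat.card {g : α → β // Surjective g} + Nat.card {g : α → {y // y ≠ v} // Surjective g} := by
  classical
  let Q : (α → β) → Prop := fun g => (∀ x, g x ≠ v) ∧ ∀ y, y ≠ v → ∃ x, g x = y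
  have hsplit : ∀ g : α → β, (∀ y, y ≠ v → ∃ x, g x = y) ↔ Surjective g ∨ Q g := by
    intro g
    refine ⟨fun h => ?_, ?_⟩
    · by_cases hv : ∃ x, g x = v
      · exact Or.inl fun y => if hy : y = v then hy ▸ hv else h y hy
      · exact Or.inr ⟨fun x hx => hv ⟨x, hx⟩, h⟩
    · rintro (h | h) y _
      exacts [h y, h.2 y ‹_›]
  have hdisj : Disjoint Surjective Q := by
    rw [disjoint_iff_inf_le]
    rintro g ⟨hs, hne, -⟩
    obtain ⟨x, hx⟩ := hs v
    exact hne x hx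
  let eQ : {g // Q g} ≃ {h : α → {y // y ≠ v} // Surjective h} :=
    { toFun := fun g => ⟨fun x => ⟨g.1 x, g.2.1 x⟩, fun y => by
        obtain ⟨x, hx⟩ := g.2.2 y.1 y.2
        exact ⟨x, Subtype.ext hx⟩⟩
      invFun := fun h => ⟨fun x => (h.1 x).1, fun x => (h.1 x).2, fun y hy => by
        obtain ⟨x, hx⟩ := h.2 ⟨y, hy⟩
        exact ⟨x, congrArg Subtype.val hx⟩⟩
      left_inv := fun _ => rfl
      right_inv := fun _ => rfl }
  rw [← Nat.card_congr eQ, ← Nat.card_sum]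
  exact Nat.card_congr <| (Equiv.subtypeEquivRight hsplit).trans (subtypeOrEquiv _ _ hdisj)

lemma card_surjective_fin_succ_succ (m k : ℕ) :
    Nat.card {f : Fin (m + 1) → Fin (k + 1) // Surjective f} =
      (k + 1) * (Nat.card {f : Fin m → Fin (k + 1) // Surjective f} +
        Nat.card {f : Fin m → Fin k // Surjective f}) := by
  have hcompl (v : Fin (k + 1)) : Fintype.card {y // y ≠ v} = k := by
    simp [Fintype.card_subtype_compl]
  simp_rw [card_surjective_fin_succ, card_cover_compl_singleton,
    fun v => card_surjective_congr (α := Fin m) (Fintype.equivFinOfCardEq (hcompl v))]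
  simp

theorem card_surjective_fin (m k : ℕ) :
    Nat.card {f : Fin m → Fin k // Surjective f} = k ! * Nat.stirlingSecond m k := by
  induction m generalizing k with
  | zero => cases k <;> simp [Surjective]
  | succ m ih =>
    cases k with
    | zero => simp
    | succ k =>
      rw [card_surjective_fin_succ_succ, ih, ih, Nat.stirlingSecond_succ_succ, Nat.factorial_succ]
      ring

end Surjections

theorem stirling2_eq_stirlingSecond : stirling2 = Nat.stirlingSecond := by
  funext n k
  induction n generalizing k with
  | zero => cases k <;> rfl
  | succ n ih => cases k <;> simp [stirling2, Nat.stirlingSecond_succ_succ, ih]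

lemma nfill_one_eq_card_surjective (m k : ℕ) :
    Nfill m k (fun _ => 1) = Nat.card {g : Fin m → Fin k // Surjective g} := by
  let Φ : {g : Fin m → Fin k // Surjective g} →
      {f : Fin m → Fin k → Bool //
        (∀ j, (Finset.univ.filter fun c => f j c = true).card = 1) ∧ ∀ c, ∃ j, f j c = true} :=
    fun g => ⟨fun j c => decide (g.1 j = c), fun j => by simp [Finset.filter_eq],
      fun c => (g.2 c).imp fun j hj => by simp [hj]⟩
  have hinj : Injective Φ := fun g g' h => Subtype.ext <| funext fun j => by
    simpa [Φ] using congrFun (congrFun (congrArg Subtype.val h) j) (g'.1 j)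
  have hsurj : Surjective Φ := by
    rintro ⟨f, hrow, hcol⟩
    choose g hg using fun j => Finset.card_eq_one.mp (hrow j)
    have hf (j : Fin m) (c : Fin k) : f j c = true ↔ g j = c := by
      simpa [eq_comm (a := g j)] using Finset.ext_iff.mp (hg j) c
    refine ⟨⟨g, fun c => (hcol c).imp fun j => (hf j c).mp⟩, ?_⟩
    ext j c
    rw [Bool.eq_iff_iff, hf, decide_eq_true_iff]
  rw [Nfill, ← Nat.card_eq_fintype_card]
  exact (Nat.card_congr (Equiv.ofBijective Φ ⟨hinj, hsurj⟩)).symm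

open PowerSeries

lemma coeff_zero_multiDiamond_X {m : ℕ} (hm : m ≠ 0) :
    coeff 0 (multiDiamond m fun _ => (X : PowerSeries ℂ)) = 0 := by
  rw [multiDiamond, coeff_mk]
  refine Finset.sum_eq_zero fun i _ => ?_
  rw [Finset.prod_eq_zero (Finset.mem_univ ⟨0, Nat.pos_of_ne_zero hm⟩), zero_mul]
  simp [coeff_X, Fin.fin_one_eq_zero]

lemma coeff_succ_multiDiamond_X (m k : ℕ) :
    coeff (k + 1) (multiDiamond m fun _ => (X : PowerSeries ℂ)) =
      Nfill m (k + 1) (fun _ => 1) := by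
  rw [multiDiamond, coeff_mk, Finset.sum_eq_single (fun _ => 1)]
  · simp [coeff_X]
  · intro i _ hi
    obtain ⟨j, hj⟩ := Function.ne_iff.mp hi
    rw [Finset.prod_eq_zero (Finset.mem_univ j), zero_mul]
    rw [coeff_X, if_neg fun h => hj (Fin.ext (by simpa using h))]
  · simp

lemma coeff_multiDiamond_X {m : ℕ} (hm : m ≠ 0) (k : ℕ) :
    coeff k (multiDiamond m fun _ => (X : PowerSeries ℂ)) = (k ! * Nat.stirlingSecond m k : ℕ) := by
  cases k with
  | zero =>
    obtain ⟨m, rfl⟩ := Nat.exists_eq_succ_of_ne_zero hm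
    simp [coeff_zero_multiDiamond_X hm]
  | succ k => rw [coeff_succ_multiDiamond_X, nfill_one_eq_card_surjective, card_surjective_fin]

theorem stmt10 (m : ℕ) (hm : 1 ≤ m) :
    multiDiamond m (fun _ => PowerSeries.X) =
      ∑ k ∈ Finset.Icc 1 m,
        ((Nat.factorial k * stirling2 m k : ℕ) : ℂ) • (PowerSeries.X : PowerSeries ℂ) ^ k := by
  ext k
  rw [coeff_multiDiamond_X (by omega), map_sum]
  simp only [stirling2_eq_stirlingSecond, coeff_smul, coeff_X_pow, smul_eq_mul, mul_ite, mul_one,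
    mul_zero, Finset.sum_ite_eq, Finset.mem_Icc]
  split_ifs with hk
  · rfl
  · obtain rfl | hlt : k = 0 ∨ m < k := by omega
    · obtain ⟨m, rfl⟩ := Nat.exists_eq_succ_of_ne_zero (by omega : m ≠ 0)
      simp
    · simp [Nat.stirlingSecond_eq_zero_of_lt hlt]
end

section
/- The number of 0-1 matrices with m rows, n columns, exactly r ones, no all-zero row, and no all-zero column equals Σ_{b=0}^{m} Σ_{a=0}^{n} (−1)^{n+m−(b+a)}·C(m,b)·C(n,a)·C(ab, r). -/
/-!
Inclusion–exclusion over the rows and columns that an `r`-set of positions is forbidden to meet.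
The `r`-sets avoiding every row outside `A` and every column outside `B` are the `r`-subsets of
`A × B`, so there are `C(|A| |B|, r)` of them; grouping the pairs `(A, B)` by their sizes gives
the double sum.
-/

open Finset

variable {ρ κ : Type*} [Fintype ρ] [Fintype κ]

def line : ρ ⊕ κ → Finset (ρ × κ) :=
  Sum.elim (fun i => {i} ×ˢ univ) (fun j => univ ×ˢ {j})

lemma sum_finset_sum_finset_eq_sum_range_sum_range {M : Type*} [AddCommMonoid M]
    (g : ℕ → ℕ → M) :
    ∑ A : Finset ρ, ∑ B : Finset κ, g #A #B =
      ∑ b ∈ range (Fintype.card ρ + 1), ∑ a ∈ range (Fintype.card κ + 1),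
        (Fintype.card ρ).choose b • (Fintype.card κ).choose a • g b a := by
  rw [← powerset_univ, sum_powerset_apply_card fun b => ∑ B : Finset κ, g b #B, card_univ]
  simp only [← powerset_univ, sum_powerset_apply_card, card_univ, smul_sum]

variable [DecidableEq ρ] [DecidableEq κ]

lemma inf_compl_line (t : Finset (ρ ⊕ κ)) :
    t.inf (fun x => (line x)ᶜ) = t.toLeftᶜ ×ˢ t.toRightᶜ := by
  ext ⟨i, j⟩
  simp [mem_inf, line, imp_not_comm]

lemma inf_powerset_compl_line (t : Finset (ρ ⊕ κ)) :
    t.inf (fun x => (line x)ᶜ.powerset) = (t.toLeftᶜ ×ˢ t.toRightᶜ).powerset := by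
  ext u
  simp only [mem_inf, mem_powerset, ← inf_compl_line, Finset.le_inf_iff]

lemma inf_compl_powerset_compl_line :
    univ.inf (fun x => ((line x)ᶜ.powerset)ᶜ) =
      ({u | (∀ i, ∃ j, (i, j) ∈ u) ∧ ∀ j, ∃ i, (i, j) ∈ u} : Finset (Finset (ρ × κ))) := by
  ext u
  simp [mem_inf, line, subset_iff, Sum.forall]

lemma sum_finset_sum_eq_sum_disjSum_compl {M : Type*} [AddCommMonoid M]
    (f : Finset (ρ ⊕ κ) → M) :
    ∑ t, f t = ∑ A : Finset ρ, ∑ B : Finset κ, f (Aᶜ.disjSum Bᶜ) := by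
  rw [← Fintype.sum_prod_type']
  refine (Fintype.sum_bijective (fun p : Finset ρ × Finset κ => p.1ᶜ.disjSum p.2ᶜ) ?_ _ _
    fun _ => rfl).symm
  exact sumEquiv.symm.bijective.comp (compl_involutive.bijective.prodMap compl_involutive.bijective)

theorem card_powersetCard_filter_meets_all_lines (r : ℕ) :
    (#{u ∈ powersetCard r (univ : Finset (ρ × κ)) |
        (∀ i, ∃ j, (i, j) ∈ u) ∧ ∀ j, ∃ i, (i, j) ∈ u} : ℤ) =
      ∑ A : Finset ρ, ∑ B : Finset κ, (-1) ^ (#Aᶜ + #Bᶜ) * ((#A * #B).choose r : ℤ) := by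
  have key := inclusion_exclusion_sum_inf_compl univ
    (fun x => (line (ρ := ρ) (κ := κ) x)ᶜ.powerset) (fun u => if #u = r then (1 : ℤ) else 0)
  simp only [sum_boole, inf_powerset_compl_line, ← powersetCard_eq_filter, card_powersetCard,
    card_product, powerset_univ, inf_compl_powerset_compl_line, smul_eq_mul,
    sum_finset_sum_eq_sum_disjSum_compl, toLeft_disjSum, toRight_disjSum, compl_compl,
    card_disjSum] at key
  rw [← key]
  congr 2
  ext u
  simp [and_comm]

def boolMatrixEquivFinset : (ρ → κ → Bool) ≃ Finset (ρ × κ) where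
  toFun f := {p | f p.1 p.2 = true}
  invFun u i j := decide ((i, j) ∈ u)
  left_inv f := by ext; simp
  right_inv u := by ext; simp

theorem card_boolMatrix_no_zero_row_col (r : ℕ) :
    (Fintype.card {f : ρ → κ → Bool //
        (Finset.univ.filter fun p : ρ × κ => f p.1 p.2 = true).card = r ∧
        (∀ i, ∃ j, f i j = true) ∧ (∀ j, ∃ i, f i j = true)} : ℤ) =
      ∑ b ∈ range (Fintype.card ρ + 1), ∑ a ∈ range (Fintype.card κ + 1),
        (-1 : ℤ) ^ (Fintype.card κ + Fintype.card ρ - (b + a)) * (Fintype.card ρ).choose b *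
          (Fintype.card κ).choose a * (a * b).choose r := by
  have h_card : Fintype.card {f : ρ → κ → Bool //
        (Finset.univ.filter fun p : ρ × κ => f p.1 p.2 = true).card = r ∧
        (∀ i, ∃ j, f i j = true) ∧ (∀ j, ∃ i, f i j = true)} =
      #{u ∈ powersetCard r (univ : Finset (ρ × κ)) |
        (∀ i, ∃ j, (i, j) ∈ u) ∧ ∀ j, ∃ i, (i, j) ∈ u} := by
    rw [← Fintype.card_coe]
    exact Fintype.card_congr
      (boolMatrixEquivFinset.subtypeEquiv fun f => by simp [boolMatrixEquivFinset])
  rw [h_card, card_powersetCard_filter_meets_all_lines]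
  simp only [card_compl, sum_finset_sum_finset_eq_sum_range_sum_range (M := ℤ)
    fun b a => (-1 : ℤ) ^ (Fintype.card ρ - b + (Fintype.card κ - a)) * ((b * a).choose r : ℤ)]
  refine sum_congr rfl fun b hb => sum_congr rfl fun a ha => ?_
  rw [mem_range, Nat.lt_succ_iff] at hb ha
  rw [show Fintype.card κ + Fintype.card ρ - (b + a) =
      Fintype.card ρ - b + (Fintype.card κ - a) by omega, nsmul_eq_mul, nsmul_eq_mul, mul_comm a b]
  ring

theorem stmt12 (m n r : ℕ) :
    (Fintype.card {f : Fin m → Fin n → Bool //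
        (Finset.univ.filter fun p : Fin m × Fin n => f p.1 p.2 = true).card = r ∧
        (∀ i : Fin m, ∃ j : Fin n, f i j = true) ∧
        (∀ j : Fin n, ∃ i : Fin m, f i j = true)} : ℤ) =
      ∑ b ∈ Finset.range (m + 1), ∑ a ∈ Finset.range (n + 1),
        (-1 : ℤ) ^ (n + m - (b + a)) * Nat.choose m b * Nat.choose n a *
          Nat.choose (a * b) r := by
  have h := card_boolMatrix_no_zero_row_col (ρ := Fin m) (κ := Fin n) r
  rw [Fintype.card_fin, Fintype.card_fin] at h
  -- the two sides differ only in the `Decidable` instances of the quantifiers over `Fin`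
  convert h using 4
end

section
/- For all positive integers k ≤ n: Σ_{a=1}^{n} Σ_{b=1}^{n} (−1)^{a+b}·C(ab−1, k−1)·C(n,a)·C(n,b) = (−1)^{k−1}. -/
/-!
For fixed `b ≥ 1`, `(k-1)! * C(a*b - 1, k-1)` is the value at `a` of the polynomial
`descPochhammer (b X - 1)` of degree `k - 1 < n`, so its `n`-th forward difference vanishes:
the alternating sum over `a ∈ [1, n]` is minus the `a = 0` term, where the polynomial takes the
value `(k-1)! * (-1)^(k-1)`. What is left is `∑_{b ∈ [1, n]} (-1)^b C(n, b) = -1`.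
-/
open Polynomial Finset

theorem descPochhammer_eval_neg_one (m : ℕ) :
    (descPochhammer ℤ m).eval (-1) = (-1) ^ m * m.factorial := by
  have hfactor (x : ℕ) : (-1 : ℤ) - x = -1 * ((x + 1 : ℕ) : ℤ) := by push_cast; ring
  simp_rw [descPochhammer_eval_eq_prod_range, hfactor, prod_mul_distrib, prod_const, card_range,
    ← Nat.cast_prod, prod_range_add_one_eq_factorial]

theorem sum_Icc_alternating_choose_mul_eval {R : Type*} [CommRing R] {n : ℕ} (p : R[X])
    (hp : p.natDegree < n) :
    ∑ a ∈ Icc 1 n, (-1 : R) ^ a * n.choose a * p.eval (a : R) = -p.eval 0 := by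
  have hdiff : ∑ a ∈ range (n + 1), (-1 : R) ^ (n - a) * n.choose a * p.eval (a : R) = 0 := by
    simpa [Polynomial.fwdDiff_iter_eq_zero_of_degree_lt hp, zsmul_eq_mul, mul_assoc] using
      (fwdDiff_iter_eq_sum_shift (1 : R) p.eval n 0).symm
  have hsum : ∑ a ∈ range (n + 1), (-1 : R) ^ a * n.choose a * p.eval (a : R) = 0 := by
    calc _ = (-1) ^ n *
          ∑ a ∈ range (n + 1), (-1 : R) ^ (n - a) * n.choose a * p.eval (a : R) := by
          rw [mul_sum]
          refine sum_congr rfl fun a _ => ?_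
          have hsign : (-1 : R) ^ a = (-1) ^ n * (-1) ^ (n - a) := by
            rw [← pow_add, show n + (n - a) = a + 2 * (n - a) by grind, pow_add, pow_mul]
            simp
          rw [hsign, mul_assoc, mul_assoc, mul_assoc]
      _ = 0 := by rw [hdiff, mul_zero]
  rw [Nat.range_succ_eq_Icc_zero, Icc_eq_cons_Ioc n.zero_le, sum_cons,
    ← Icc_add_one_left_eq_Ioc] at hsum
  simpa [eq_neg_iff_add_eq_zero, add_comm] using hsum

theorem sum_Icc_alternating_choose_mul_choose_mul_sub_one {n m b : ℕ} (hm : m < n) (hb : 1 ≤ b) :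
    ∑ a ∈ Icc 1 n, (-1 : ℤ) ^ a * n.choose a * ((a * b - 1).choose m : ℤ) = -(-1) ^ m := by
  set p : ℤ[X] := (descPochhammer ℤ m).comp (C (b : ℤ) * X - 1)
  have hdeg : p.natDegree < n := by
    refine natDegree_comp_le.trans_lt ?_
    have hlin : (C (b : ℤ) * X - 1).natDegree ≤ 1 := by compute_degree
    rw [descPochhammer_natDegree]
    nlinarith
  have heval (a : ℕ) (ha : a ∈ Icc 1 n) : p.eval (a : ℤ) = m.factorial * (a * b - 1).choose m := by
    have hab : 1 ≤ a * b := Nat.one_le_iff_ne_zero.mpr (by have := (mem_Icc.mp ha).1; positivity)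
    have hlin : (C (b : ℤ) * X - 1).eval (a : ℤ) = ((a * b - 1 : ℕ) : ℤ) := by
      rw [eval_sub, eval_mul, eval_C, eval_X, eval_one, Nat.cast_sub hab]
      push_cast
      ring
    rw [eval_comp, hlin, descPochhammer_eval_eq_descFactorial,
      Nat.descFactorial_eq_factorial_mul_choose, Nat.cast_mul]
  have heval0 : p.eval 0 = (-1) ^ m * m.factorial := by
    simp [p, eval_comp, descPochhammer_eval_neg_one]
  have hsum := sum_Icc_alternating_choose_mul_eval p hdeg
  rw [sum_congr rfl fun a ha => by rw [heval a ha], heval0] at hsum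
  refine mul_left_cancel₀ (Nat.cast_ne_zero.mpr m.factorial_ne_zero : (m.factorial : ℤ) ≠ 0) ?_
  rw [mul_sum, mul_neg, mul_comm _ ((-1 : ℤ) ^ m), ← hsum]
  exact sum_congr rfl fun a _ => by ring

theorem stmt13 (n k : ℕ) (hk : 1 ≤ k) (hkn : k ≤ n) :
    ∑ a ∈ Finset.Icc 1 n, ∑ b ∈ Finset.Icc 1 n,
        (-1 : ℤ) ^ (a + b) * Nat.choose (a * b - 1) (k - 1) *
          Nat.choose n a * Nat.choose n b = (-1 : ℤ) ^ (k - 1) := by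
  have hm : k - 1 < n := by omega
  have hsign : ∑ b ∈ Icc 1 n, (-1 : ℤ) ^ b * n.choose b = -1 := by
    simpa using sum_Icc_alternating_choose_mul_eval (1 : ℤ[X]) (by rw [natDegree_one]; omega)
  calc _ = ∑ b ∈ Icc 1 n, (-1 : ℤ) ^ b * n.choose b *
        ∑ a ∈ Icc 1 n, (-1 : ℤ) ^ a * n.choose a * ((a * b - 1).choose (k - 1) : ℤ) := by
        rw [sum_comm]
        refine sum_congr rfl fun b _ => ?_
        rw [mul_sum]
        exact sum_congr rfl fun a _ => by ring
    _ = ∑ b ∈ Icc 1 n, (-1 : ℤ) ^ b * n.choose b * -(-1) ^ (k - 1) :=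
        sum_congr rfl fun b hb => by
          rw [sum_Icc_alternating_choose_mul_choose_mul_sub_one hm (mem_Icc.mp hb).1]
    _ = (-1 : ℤ) ^ (k - 1) := by rw [← sum_mul, hsign, neg_one_mul, neg_neg]
end

section
/- For all positive integers n, k, a with 1 ≤ k ≤ n and 1 ≤ a ≤ n: Σ_{b=1}^{n} (−1)^b·C(n,b)·C(ab−1, k−1) = (−1)^k. -/
/-! The map `b ↦ C(ab - 1, k - 1)` agrees for `b ≥ 1` with a polynomial in `b` of degree
`k - 1 < n`, namely `(aX - 1 choose k - 1)`, whose value at `b = 0` is `C(-1, k - 1) = (-1)^(k-1)`.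
The `n`-th finite difference of a polynomial of degree `< n` vanishes, so the alternating sum
over `0 ≤ b ≤ n` is zero and the sum over `1 ≤ b ≤ n` equals `-(-1)^(k-1) = (-1)^k`. -/

open Polynomial Finset
open scoped Nat

theorem Polynomial.sum_range_neg_one_pow_mul_choose_mul_eval_eq_zero {R : Type*} [CommRing R]
    {P : R[X]} {n : ℕ} (hP : P.natDegree < n) :
    ∑ b ∈ range (n + 1), (-1 : R) ^ b * n.choose b * P.eval (b : R) = 0 := by
  have h := congr_fun (fwdDiff_iter_eq_zero_of_degree_lt hP) 0
  rw [fwdDiff_iter_eq_sum_shift] at h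
  calc _ = (-1) ^ n * ∑ b ∈ range (n + 1),
        ((-1 : ℤ) ^ (n - b) * n.choose b) • P.eval (0 + b • 1) := by
        rw [mul_sum]
        refine sum_congr rfl fun b hb => ?_
        obtain ⟨c, rfl⟩ := Nat.exists_eq_add_of_le (Nat.le_of_lt_succ (mem_range.mp hb))
        simp only [pow_add, add_tsub_cancel_left, zero_add, nsmul_eq_mul, mul_one, zsmul_eq_mul,
          Int.cast_mul, Int.cast_pow, Int.cast_neg, Int.cast_one, Int.cast_natCast]
        have hsq : (-1 : R) ^ c * (-1) ^ c = 1 := by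
          rw [← mul_pow, neg_one_mul, neg_neg, one_pow]
        linear_combination (-(-1 : R) ^ b * (b + c).choose b * P.eval (b : R)) * hsq
    _ = 0 := by rw [h, Pi.zero_apply, mul_zero]

noncomputable def binomialPoly (K : Type*) [Field K] (m : ℕ) : K[X] :=
  C (m ! : K)⁻¹ * descPochhammer K m

theorem natDegree_binomialPoly_le (K : Type*) [Field K] (m : ℕ) :
    (binomialPoly K m).natDegree ≤ m :=
  (natDegree_C_mul_le _ _).trans (descPochhammer_natDegree K m).le

section CharZero

variable {K : Type*} [Field K] [CharZero K]

theorem binomialPoly_eval_natCast (r m : ℕ) : (binomialPoly K m).eval (r : K) = r.choose m := by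
  rw [binomialPoly, eval_mul, eval_C, Nat.cast_choose_eq_descPochhammer_div, inv_mul_eq_div]

theorem binomialPoly_eval_neg_one (m : ℕ) : (binomialPoly K m).eval (-1) = (-1) ^ m := by
  rw [binomialPoly, eval_mul, eval_C, descPochhammer_eval_eq_ascPochhammer,
    show (-1 : K) - m + 1 = -m by ring, ascPochhammer_eval_neg_eq_descPochhammer,
    descPochhammer_eval_eq_descFactorial, Nat.descFactorial_self, mul_left_comm,
    inv_mul_cancel₀ (Nat.cast_ne_zero.mpr m.factorial_ne_zero), mul_one]

end CharZero

theorem stmt14_general (n k a : ℕ) (hk : 1 ≤ k) (hkn : k ≤ n) (ha : 1 ≤ a) :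
    ∑ b ∈ Finset.Icc 1 n,
        (-1 : ℤ) ^ b * Nat.choose n b * Nat.choose (a * b - 1) (k - 1) = (-1 : ℤ) ^ k := by
  set Q : ℚ[X] := (binomialPoly ℚ (k - 1)).comp (C (a : ℚ) * X - 1)
  have hQ : Q.natDegree < n := calc
    Q.natDegree ≤ (k - 1) * 1 :=
      natDegree_comp_le.trans (Nat.mul_le_mul (natDegree_binomialPoly_le ℚ _) (by compute_degree))
    _ < n := by omega
  have hQ0 : Q.eval 0 = (-1) ^ (k - 1) := by
    simp [Q, eval_comp, binomialPoly_eval_neg_one]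
  have hQb : ∀ b ∈ Icc 1 n, Q.eval (b : ℚ) = (a * b - 1).choose (k - 1) := by
    intro b hb
    have hab : 1 ≤ a * b := Nat.mul_pos ha (mem_Icc.mp hb).1
    simp [Q, eval_comp, ← binomialPoly_eval_natCast, hab]
  have h := sum_range_neg_one_pow_mul_choose_mul_eval_eq_zero hQ
  rw [range_eq_Ico, sum_eq_sum_Ico_succ_bot (by omega), Ico_add_one_right_eq_Icc, zero_add,
    sum_congr rfl fun b hb => by rw [hQb b hb], Nat.cast_zero, hQ0, Nat.choose_zero_right] at h
  have hsign : (-1 : ℚ) ^ k = -(-1) ^ (k - 1) := by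
    rw [← pow_sub_one_mul (by omega), mul_neg_one]
  suffices h' : ∑ b ∈ Icc 1 n, (-1 : ℚ) ^ b * n.choose b * (a * b - 1).choose (k - 1)
      = (-1) ^ k by exact_mod_cast h'
  linear_combination h - hsign

theorem stmt14 (n k a : ℕ) (hk : 1 ≤ k) (hkn : k ≤ n) (ha : 1 ≤ a) (han : a ≤ n) :
    ∑ b ∈ Finset.Icc 1 n,
        (-1 : ℤ) ^ b * Nat.choose n b * Nat.choose (a * b - 1) (k - 1) = (-1 : ℤ) ^ k :=
  stmt14_general n k a hk hkn ha
end

section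
/- For all positive integers m ≥ 2: Σ_{a=0}^{m} Σ_{k=1}^{2m−a} Σ_{i₁=0}^{a} Σ_{i₂=0}^{2m−2a} C(m,a)·((−1)^{k+1}/k)·i₁!·i₂!·S(a,i₁)·S(2m−2a,i₂)·M(k;i₁,i₂) = 0, where M(k;i₁,i₂) = k!/((k−i₁)!(k−i₂)!(i₁+i₂−k)!) when max(i₁,i₂) ≤ k ≤ i₁+i₂ and 0 otherwise. -/
/-- `M k i₁ i₂ = k!/((k-i₁)!(k-i₂)!(i₁+i₂-k)!)` when `max i₁ i₂ ≤ k ≤ i₁ + i₂`,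
and `0` otherwise. -/
def Mtri (k i₁ i₂ : ℕ) : ℕ :=
  if i₁ ≤ k ∧ i₂ ≤ k ∧ k ≤ i₁ + i₂ then
    Nat.factorial k /
      (Nat.factorial (k - i₁) * Nat.factorial (k - i₂) * Nat.factorial (i₁ + i₂ - k))
  else 0

open Finset Nat

theorem sum_range_eq_sum_range_of_eq_zero {M : Type*} [AddCommMonoid M] {f : ℕ → M} {m n : ℕ}
    (hm : ∀ k ≥ m, f k = 0) (hn : ∀ k ≥ n, f k = 0) :
    ∑ k ∈ range m, f k = ∑ k ∈ range n, f k :=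
  (eventually_constant_sum hm (le_max_left m n)).symm.trans
    (eventually_constant_sum hn (le_max_right m n))

theorem eq_of_forall_sum_range_choose_smul_eq {M : Type*} [AddCancelCommMonoid M]
    {x y : ℕ → M} (h : ∀ t, ∑ k ∈ range (t + 1), t.choose k • x k =
      ∑ k ∈ range (t + 1), t.choose k • y k) : x = y := by
  funext t
  induction t using Nat.strong_induction_on with
  | _ t ih =>
    have ht := h t
    rw [sum_range_succ, sum_range_succ, choose_self, one_smul, one_smul,
      sum_congr rfl fun k hk ↦ by rw [ih k (mem_range.mp hk)]] at ht
    exact add_left_cancel ht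

theorem mul_descFactorial (t i : ℕ) :
    t * t.descFactorial i = t.descFactorial (i + 1) + i * t.descFactorial i := by
  rcases le_or_gt i t with hi | hi
  · rw [descFactorial_succ, ← add_mul, Nat.sub_add_cancel hi]
  · simp [descFactorial_eq_zero_iff_lt.mpr hi]

theorem sum_range_descFactorial_mul_stirlingSecond (t n : ℕ) :
    ∑ i ∈ range (n + 1), t.descFactorial i * stirlingSecond n i = t ^ n := by
  induction n with
  | zero => simp
  | succ n ih =>
    calc ∑ i ∈ range (n + 2), t.descFactorial i * stirlingSecond (n + 1) i
        = ∑ i ∈ range (n + 1), (i + 1) * t.descFactorial (i + 1) * stirlingSecond n (i + 1) +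
            ∑ i ∈ range (n + 1), t.descFactorial (i + 1) * stirlingSecond n i := by
          rw [sum_range_succ', ← sum_add_distrib]
          simp only [stirlingSecond_succ_succ, stirlingSecond_succ_zero, mul_zero, add_zero]
          exact sum_congr rfl fun i _ ↦ by ring
      _ = ∑ i ∈ range (n + 1), i * t.descFactorial i * stirlingSecond n i +
            ∑ i ∈ range (n + 1), t.descFactorial (i + 1) * stirlingSecond n i := by
          congr 1
          have h := sum_range_succ' (fun i ↦ i * t.descFactorial i * stirlingSecond n i) (n + 1)
          rw [sum_range_succ, stirlingSecond_eq_zero_of_lt (lt_add_one n)] at h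
          simpa using h.symm
      _ = t ^ (n + 1) := by
          rw [pow_succ, ← ih, sum_mul, ← sum_add_distrib]
          exact sum_congr rfl fun i _ ↦ by rw [mul_comm _ t, ← mul_assoc, mul_descFactorial]; ring

theorem stirling2_eq_stirlingSecond_s19 : ∀ n k, stirling2 n k = stirlingSecond n k
  | 0, 0 | 0, _ + 1 | _ + 1, 0 => rfl
  | n + 1, k + 1 => by
    rw [stirling2, stirlingSecond_succ_succ, stirling2_eq_stirlingSecond_s19 n (k + 1),
      stirling2_eq_stirlingSecond_s19 n k]

theorem Mtri_eq_zero_of_lt {k i₁ : ℕ} (i₂ : ℕ) (h : k < i₁) : Mtri k i₁ i₂ = 0 :=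
  if_neg (by omega)

theorem Mtri_eq_zero_of_add_lt {k i₁ i₂ : ℕ} (h : i₁ + i₂ < k) : Mtri k i₁ i₂ = 0 :=
  if_neg (by omega)

theorem Mtri_add_left (i₁ j i₂ : ℕ) (hj : j ≤ i₂) :
    Mtri (i₁ + j) i₁ i₂ = (i₁ + j).choose i₁ * i₁.choose (i₂ - j) := by
  rcases lt_or_ge (i₁ + j) i₂ with h | h
  · rw [Mtri, if_neg (by omega), choose_eq_zero_of_lt (show i₁ < i₂ - j by omega), mul_zero]
  rw [Mtri, if_pos (by omega), Nat.add_sub_cancel_left, Nat.add_sub_add_left]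
  refine Nat.div_eq_of_eq_mul_left (by positivity) ?_
  have hi₁ := choose_mul_factorial_mul_factorial (show i₂ - j ≤ i₁ by omega)
  rw [show i₁ - (i₂ - j) = i₁ + j - i₂ by omega] at hi₁
  rw [← add_choose_mul_factorial_mul_factorial, ← hi₁, choose_symm_add]
  ring

theorem sum_range_choose_mul_Mtri (t i₁ i₂ : ℕ) :
    ∑ k ∈ range (t + 1), t.choose k * Mtri k i₁ i₂ = t.choose i₁ * t.choose i₂ := by
  rcases lt_or_ge t i₁ with hi | hi
  · rw [choose_eq_zero_of_lt hi, zero_mul]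
    exact sum_eq_zero fun k hk ↦ by
      rw [Mtri_eq_zero_of_lt _ (by simp at hk; omega), mul_zero]
  obtain ⟨s, rfl⟩ := Nat.exists_eq_add_of_le' hi
  calc ∑ k ∈ range (s + i₁ + 1), (s + i₁).choose k * Mtri k i₁ i₂
      = ∑ k ∈ range (i₁ + (i₂ + 1)), (s + i₁).choose k * Mtri k i₁ i₂ := by
        refine sum_range_eq_sum_range_of_eq_zero (fun k hk ↦ ?_) (fun k hk ↦ ?_)
        · rw [choose_eq_zero_of_lt (by omega), zero_mul]
        · rw [Mtri_eq_zero_of_add_lt (by omega), mul_zero]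
    _ = ∑ j ∈ range (i₂ + 1), (s + i₁).choose i₁ * (s.choose j * i₁.choose (i₂ - j)) := by
        rw [sum_range_add, sum_eq_zero fun k hk ↦ by
          rw [Mtri_eq_zero_of_lt _ (mem_range.mp hk), mul_zero], zero_add]
        refine sum_congr rfl fun j hj ↦ ?_
        rw [Mtri_add_left _ _ _ (mem_range_succ_iff.mp hj), ← mul_assoc,
          choose_mul (le_add_right _ _)]
        simp [mul_assoc]
    _ = (s + i₁).choose i₁ * (s + i₁).choose i₂ := by
        rw [← mul_sum, add_choose_eq s i₁ i₂, Nat.sum_antidiagonal_eq_sum_range_succ_mk]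

theorem sum_factorial_mul_stirlingSecond_mul_Mtri (a b k : ℕ) :
    ∑ i₁ ∈ range (a + 1), ∑ i₂ ∈ range (b + 1),
      i₁ ! * i₂ ! * stirlingSecond a i₁ * stirlingSecond b i₂ * Mtri k i₁ i₂ =
    k ! * stirlingSecond (a + b) k := by
  revert k
  refine funext_iff.mp (eq_of_forall_sum_range_choose_smul_eq fun t ↦ ?_)
  simp only [smul_eq_mul]
  trans t ^ (a + b)
  · calc _ = ∑ i₁ ∈ range (a + 1), ∑ i₂ ∈ range (b + 1),
            i₁ ! * i₂ ! * stirlingSecond a i₁ * stirlingSecond b i₂ *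
              ∑ k ∈ range (t + 1), t.choose k * Mtri k i₁ i₂ := by
          simp only [mul_sum]
          rw [sum_comm]
          refine sum_congr rfl fun i₁ _ ↦ ?_
          rw [sum_comm]
          exact sum_congr rfl fun i₂ _ ↦ sum_congr rfl fun k _ ↦ by ring
      _ = (∑ i₁ ∈ range (a + 1), t.descFactorial i₁ * stirlingSecond a i₁) *
            ∑ i₂ ∈ range (b + 1), t.descFactorial i₂ * stirlingSecond b i₂ := by
          simp only [sum_range_choose_mul_Mtri, descFactorial_eq_factorial_mul_choose, sum_mul_sum]
          exact sum_congr rfl fun i₁ _ ↦ sum_congr rfl fun i₂ _ ↦ by ring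
      _ = t ^ (a + b) := by
          rw [sum_range_descFactorial_mul_stirlingSecond,
            sum_range_descFactorial_mul_stirlingSecond, pow_add]
  · rw [← sum_range_descFactorial_mul_stirlingSecond t (a + b)]
    simp only [descFactorial_eq_factorial_mul_choose, mul_assoc, mul_left_comm (t.choose _)]
    refine sum_range_eq_sum_range_of_eq_zero (fun i hi ↦ ?_) (fun i hi ↦ ?_)
    · rw [stirlingSecond_eq_zero_of_lt hi, mul_zero, mul_zero]
    · rw [choose_eq_zero_of_lt hi, zero_mul, mul_zero]

theorem sum_Icc_neg_one_pow_div_mul_factorial_mul_stirlingSecond {n : ℕ} (hn : 2 ≤ n) :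
    ∑ k ∈ Icc 1 n, (-1 : ℚ) ^ (k + 1) / k * (k ! * stirlingSecond n k : ℕ) = 0 := by
  obtain ⟨n, rfl⟩ := Nat.exists_eq_add_of_le' hn
  set f : ℕ → ℚ := fun j ↦ (-1) ^ j * (j ! * stirlingSecond (n + 1) j : ℕ)
  have hstep : ∀ j, (-1 : ℚ) ^ (j + 1 + 1) / (j + 1 : ℕ) *
      ((j + 1)! * stirlingSecond (n + 1 + 1) (j + 1) : ℕ) = f j - f (j + 1) := by
    intro j
    simp only [f, stirlingSecond_succ_succ, factorial_succ]
    push_cast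
    field_simp
    ring
  rw [← Ico_add_one_right_eq_Icc, ← zero_add 1, ← sum_Ico_add', ← range_eq_Ico,
    sum_congr rfl fun j _ ↦ hstep j, sum_range_sub']
  simp [f, stirlingSecond_eq_zero_of_lt]

theorem stmt19 (m : ℕ) (hm : 2 ≤ m) :
    ∑ a ∈ Finset.range (m + 1), ∑ k ∈ Finset.Icc 1 (2 * m - a),
      ∑ i₁ ∈ Finset.range (a + 1), ∑ i₂ ∈ Finset.range (2 * m - 2 * a + 1),
        (Nat.choose m a : ℚ) * ((-1 : ℚ) ^ (k + 1) / (k : ℚ)) *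
          (Nat.factorial i₁ : ℚ) * (Nat.factorial i₂ : ℚ) *
          (stirling2 a i₁ : ℚ) * (stirling2 (2 * m - 2 * a) i₂ : ℚ) *
          (Mtri k i₁ i₂ : ℚ) = 0 := by
  refine sum_eq_zero fun a ha ↦ ?_
  have hsplit : a + (2 * m - 2 * a) = 2 * m - a := by simp at ha; omega
  calc _ = (m.choose a : ℚ) * ∑ k ∈ Icc 1 (2 * m - a),
          (-1 : ℚ) ^ (k + 1) / k * (k ! * stirlingSecond (2 * m - a) k : ℕ) := by
        rw [mul_sum]
        refine sum_congr rfl fun k _ ↦ ?_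
        rw [← hsplit, ← sum_factorial_mul_stirlingSecond_mul_Mtri]
        simp only [stirling2_eq_stirlingSecond_s19, Nat.cast_sum, Nat.cast_mul, mul_sum]
        exact sum_congr rfl fun i₁ _ ↦ sum_congr rfl fun i₂ _ ↦ by ring
    _ = 0 := by
        rw [sum_Icc_neg_one_pow_div_mul_factorial_mul_stirlingSecond (by omega), mul_zero]
end
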